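/- Let X be a completely regular Hausdorff (Tychonoff) space and let U be an open subset of βX containing X. Then H = {f ∈ C_B(X) : f_β vanishes on βX \ U} is a non-vanishing closed ideal of C_B(X) and λ_H X = U. -/
import Mathlib


open BoundedContinuousFunction Set Filter Topology

section Preamble

variable {X : Type*} [TopologicalSpace X] {𝕜 : Type*} [RCLike 𝕜]

theorem betaExt_aux (f : X →ᵇ 𝕜) :
    Continuous (fun x => (⟨f x, by
      simpa [Metric.mem_closedBall, dist_zero_right] using f.norm_coe_le_norm x⟩ :
        Metric.closedBall (0 : 𝕜) ‖f‖)) :=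
  f.continuous.subtype_mk _

/-- `f_β`, the unique continuous extension of a bounded continuous function `f : X → 𝕜` to the
Stone–Čech compactification `βX`. -/
noncomputable def betaExt (f : X →ᵇ 𝕜) : StoneCech X → 𝕜 :=
  haveI : CompactSpace (Metric.closedBall (0 : 𝕜) ‖f‖) :=
    isCompact_iff_compactSpace.mp (isCompact_closedBall 0 ‖f‖)
  fun p => (stoneCechExtend (betaExt_aux f) p).1

theorem betaExt_unit (f : X →ᵇ 𝕜) (x : X) : betaExt f (stoneCechUnit x) = f x := by
  haveI : CompactSpace (Metric.closedBall (0 : 𝕜) ‖f‖) :=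
    isCompact_iff_compactSpace.mp (isCompact_closedBall 0 ‖f‖)
  exact congrArg Subtype.val (congrFun (stoneCechExtend_extends (betaExt_aux f)) x)

theorem continuous_betaExt (f : X →ᵇ 𝕜) : Continuous (betaExt f) := by
  haveI : CompactSpace (Metric.closedBall (0 : 𝕜) ‖f‖) :=
    isCompact_iff_compactSpace.mp (isCompact_closedBall 0 ‖f‖)
  exact continuous_subtype_val.comp (continuous_stoneCechExtend _)

/-- `λ_G X`, the union over `g ∈ G` of the cozero-sets in `βX` of the extensions `g_β`. -/
def lambdaSet (G : Ideal (X →ᵇ 𝕜)) : Set (StoneCech X) :=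
  ⋃ g ∈ G, {p | betaExt g p ≠ 0}

end Preamble

section Aux

variable {X : Type*} [TopologicalSpace X] {𝕜 : Type*} [RCLike 𝕜]

theorem betaExt_eq_of_agree (f : X →ᵇ 𝕜) (h : StoneCech X → 𝕜) (hc : Continuous h)
    (hagree : ∀ x, f x = h (stoneCechUnit x)) : betaExt f = h := by
  apply Continuous.ext_on denseRange_stoneCechUnit (continuous_betaExt f) hc
  rintro _ ⟨x, rfl⟩
  rw [betaExt_unit, hagree]

theorem betaExt_zero : betaExt (0 : X →ᵇ 𝕜) = 0 :=
  betaExt_eq_of_agree 0 0 continuous_const fun _ => rfl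

theorem betaExt_add (f g : X →ᵇ 𝕜) :
    betaExt (f + g) = fun p => betaExt f p + betaExt g p := by
  apply betaExt_eq_of_agree _ _ ((continuous_betaExt f).add (continuous_betaExt g))
  intro x
  simp [betaExt_unit]

theorem betaExt_mul (f g : X →ᵇ 𝕜) :
    betaExt (f * g) = fun p => betaExt f p * betaExt g p := by
  apply betaExt_eq_of_agree _ _ ((continuous_betaExt f).mul (continuous_betaExt g))
  intro x
  simp [betaExt_unit]

theorem norm_betaExt_le (f : X →ᵇ 𝕜) (p : StoneCech X) : ‖betaExt f p‖ ≤ ‖f‖ := by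
  haveI : CompactSpace (Metric.closedBall (0 : 𝕜) ‖f‖) :=
    isCompact_iff_compactSpace.mp (isCompact_closedBall 0 ‖f‖)
  have h2 := (stoneCechExtend (betaExt_aux f) p).2
  rw [Metric.mem_closedBall, dist_zero_right] at h2
  exact h2

theorem exists_bcf_of_mem {X : Type*} [TopologicalSpace X] {𝕜 : Type*} [RCLike 𝕜]
    {U : Set (StoneCech X)} (hU : IsOpen U) {p : StoneCech X} (hp : p ∈ U) :
    ∃ f : X →ᵇ 𝕜, (∀ q ∉ U, betaExt f q = 0) ∧ betaExt f p = 1 := by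
  obtain ⟨g, hg0, hg1, hmem⟩ := exists_continuous_zero_one_of_isClosed
    (hU.isClosed_compl) (isClosed_singleton (x := p))
    (by simpa [Set.disjoint_singleton_right] using hp)
  have hcont : Continuous fun q : StoneCech X => ((g q : ℝ) : 𝕜) :=
    RCLike.continuous_ofReal.comp g.continuous
  have hb : ∀ x : X, ‖((g (stoneCechUnit x) : ℝ) : 𝕜)‖ ≤ 1 := by
    intro x
    rw [RCLike.norm_ofReal, abs_le]
    have := hmem (stoneCechUnit x)
    exact ⟨by linarith [this.1], this.2⟩
  set f : X →ᵇ 𝕜 := BoundedContinuousFunction.ofNormedAddCommGroup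
    (fun x => ((g (stoneCechUnit x) : ℝ) : 𝕜)) (hcont.comp continuous_stoneCechUnit) 1 hb with hfdef
  have hext : betaExt f = fun q => ((g q : ℝ) : 𝕜) :=
    betaExt_eq_of_agree _ _ hcont fun x => rfl
  refine ⟨f, ?_, ?_⟩
  · intro q hq
    rw [hext]
    simp [hg0 hq]
  · rw [hext]
    simp [hg1 rfl]

end Aux

/-- For a Tychonoff space `X` and an open `U ⊆ βX` containing (the copy of) `X`, the set
`H = {f ∈ C_B(X) : f_β = 0 on βX \ U}` is a non-vanishing closed ideal of `C_B(X)` with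
`λ_H X = U`. -/
theorem exists_ideal_of_open {X : Type*} [TopologicalSpace X] [T35Space X]
    {𝕜 : Type*} [RCLike 𝕜] (U : Set (StoneCech X)) (hU : IsOpen U)
    (hXU : range (stoneCechUnit : X → StoneCech X) ⊆ U) :
    ∃ H : Ideal (X →ᵇ 𝕜),
      (∀ f : X →ᵇ 𝕜, f ∈ H ↔ ∀ p ∉ U, betaExt f p = 0) ∧
      IsClosed (H : Set (X →ᵇ 𝕜)) ∧ (∀ x : X, ∃ f ∈ H, f x ≠ 0) ∧
      lambdaSet H = U := by
  refine ⟨{ carrier := {f : X →ᵇ 𝕜 | ∀ p ∉ U, betaExt f p = 0}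
            add_mem' := ?_
            zero_mem' := ?_
            smul_mem' := ?_ }, fun f => Iff.rfl, ?_, ?_, ?_⟩
  · intro f g hf hg p hp
    rw [betaExt_add]
    simp [hf p hp, hg p hp]
  · intro p _
    rw [betaExt_zero]; rfl
  · intro c f hf p hp
    show betaExt (c * f) p = 0
    rw [betaExt_mul]
    simp [hf p hp]
  · -- closedness
    have : {f : X →ᵇ 𝕜 | ∀ p ∉ U, betaExt f p = 0} =
        ⋂ p ∈ Uᶜ, {f : X →ᵇ 𝕜 | betaExt f p = 0} := by
      ext f; simp [Set.mem_iInter]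
    show IsClosed {f : X →ᵇ 𝕜 | ∀ p ∉ U, betaExt f p = 0}
    rw [this]
    refine isClosed_biInter fun p _ => ?_
    have hlip : LipschitzWith 1 (fun f : X →ᵇ 𝕜 => betaExt f p) := by
      intro f g
      rw [edist_dist, edist_dist]
      simp only [ENNReal.coe_one, one_mul]
      apply ENNReal.ofReal_le_ofReal
      rw [dist_eq_norm, dist_eq_norm]
      have : betaExt f p - betaExt g p = betaExt (f - g) p := by
        have : f = (f - g) + g := by ring
        nth_rewrite 1 [this]
        rw [betaExt_add]; ring
      rw [this]
      exact norm_betaExt_le _ _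
    exact isClosed_eq hlip.continuous continuous_const
  · -- non-vanishing
    intro x
    obtain ⟨f, hf0, hf1⟩ := exists_bcf_of_mem (𝕜 := 𝕜) hU (hXU ⟨x, rfl⟩)
    refine ⟨f, hf0, ?_⟩
    rw [← betaExt_unit, hf1]
    exact one_ne_zero
  · -- lambdaSet = U
    apply Set.Subset.antisymm
    · intro p hp
      simp only [lambdaSet, Set.mem_iUnion] at hp
      obtain ⟨g, hg, hgp⟩ := hp
      by_contra hpU
      exact hgp (hg p hpU)
    · intro p hp
      obtain ⟨f, hf0, hf1⟩ := exists_bcf_of_mem (𝕜 := 𝕜) hU hp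
      simp only [lambdaSet, Set.mem_iUnion]
      exact ⟨f, hf0, by rw [Set.mem_setOf_eq, hf1]; exact one_ne_zero⟩
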